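/- Let α ∈ (0,1), t₀ < t* < θ, φ ∈ L^∞([t₀,t*], ℝⁿ), and set x(t) = (1/Γ(α)) ∫_{t₀}^t φ(τ)/(t−τ)^{1−α} dτ for t ∈ [t₀,t*]. Define ψ(t) = (sin(απ)/π) ∫_{t₀}^{t*} (t*−τ)^α φ(τ)/(t−τ) dτ for t ∈ [t*,θ]. Then for every t ∈ (t*,θ], ψ(t) = ((t−t*)^α α / Γ(1−α)) ∫_{t₀}^{t*} x(τ)/(t−τ)^{1+α} dτ. -/

import Mathlib

/-!
Substituting `x = Γ(α)⁻¹ I^α φ` and exchanging the order of integration over the triangle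
`t₀ < s < τ < t*` (legitimate because `φ` and `τ ↦ (t - τ)^(-1-α)` are bounded there while
`(τ - s)^(α-1)` is integrable) reduces the right-hand side to integrating `φ(s)` against
`∫_s^{t*} (τ - s)^(α-1) (t - τ)^(-1-α) dτ = (t* - s)^α (t - t*)^(-α) / (α (t - s))`.
The remaining constant is `1 / (Γ(α) Γ(1-α)) = sin(απ)/π` by the reflection formula.
-/

open MeasureTheory Set Real

lemma intervalIntegrable_sub_rpow {α : ℝ} (hα : 0 < α) (a b : ℝ) :
    IntervalIntegrable (fun x => (b - x) ^ (α - 1)) volume a b := by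
  simpa using (intervalIntegral.intervalIntegrable_rpow' (a := 0) (b := b - a) (r := α - 1)
    (by linarith)).comp_sub_left b |>.symm

lemma intervalIntegrable_rpow_sub {α : ℝ} (hα : 0 < α) (a b : ℝ) :
    IntervalIntegrable (fun x => (x - a) ^ (α - 1)) volume a b := by
  simpa using (intervalIntegral.intervalIntegrable_rpow' (a := 0) (b := b - a) (r := α - 1)
    (by linarith)).comp_sub_right a

lemma integral_sub_rpow {α : ℝ} (hα : 0 < α) (a τ : ℝ) :
    ∫ s in a..τ, (τ - s) ^ (α - 1) = (τ - a) ^ α / α := by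
  rw [intervalIntegral.integral_comp_sub_left (fun u => u ^ (α - 1)), sub_self,
    integral_rpow (Or.inl (by linarith)), sub_add_cancel, zero_rpow hα.ne', sub_zero]

lemma MeasureTheory.MemLp.ae_norm_le_eLpNorm_top {X E : Type*} [MeasurableSpace X]
    [NormedAddCommGroup E] {μ : Measure X} {f : X → E} (hf : MemLp f ⊤ μ) :
    ∀ᵐ x ∂μ, ‖f x‖ ≤ (eLpNorm f ⊤ μ).toReal := by
  filter_upwards [ae_le_eLpNormEssSup (f := f)] with x hx
  rw [← toReal_enorm, eLpNorm_exponent_top]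
  exact ENNReal.toReal_mono (eLpNorm_exponent_top (f := f) ▸ hf.2.ne) hx

lemma MeasureTheory.MemLp.comp_snd_top {X Y E : Type*} [MeasurableSpace X] [MeasurableSpace Y]
    [NormedAddCommGroup E] {μ : Measure X} {ν : Measure Y} [SFinite ν] {f : Y → E}
    (hf : MemLp f ⊤ ν) : MemLp (fun p : X × Y => f p.2) ⊤ (μ.prod ν) :=
  memLp_top_of_bound hf.1.comp_snd _
    (Measure.quasiMeasurePreserving_snd.ae hf.ae_norm_le_eLpNorm_top)

lemma MeasureTheory.MemLp.comp_fst_top {X Y E : Type*} [MeasurableSpace X] [MeasurableSpace Y]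
    [NormedAddCommGroup E] {μ : Measure X} {ν : Measure Y} [SFinite ν] {f : X → E}
    (hf : MemLp f ⊤ μ) : MemLp (fun p : X × Y => f p.1) ⊤ (μ.prod ν) :=
  memLp_top_of_bound hf.1.comp_fst _
    (Measure.quasiMeasurePreserving_fst.ae hf.ae_norm_le_eLpNorm_top)

lemma integrable_indicator_sub_rpow_prod {α : ℝ} (hα : 0 < α) (a b : ℝ) :
    Integrable ({p : ℝ × ℝ | p.2 ≤ p.1}.indicator fun p => (p.1 - p.2) ^ (α - 1))
      ((volume.restrict (Ioc a b)).prod (volume.restrict (Ioc a b))) := by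
  have hslice : ∀ τ, (fun s =>
      {p : ℝ × ℝ | p.2 ≤ p.1}.indicator (fun p => (p.1 - p.2) ^ (α - 1)) (τ, s))
      = (Iic τ).indicator fun s => (τ - s) ^ (α - 1) := fun τ => rfl
  have hmeas : Measurable ({p : ℝ × ℝ | p.2 ≤ p.1}.indicator fun p => (p.1 - p.2) ^ (α - 1)) :=
    (by fun_prop : Measurable fun p : ℝ × ℝ => (p.1 - p.2) ^ (α - 1)).indicator
      (measurableSet_le measurable_snd measurable_fst)
  refine (integrable_prod_iff hmeas.aestronglyMeasurable).2 ⟨.of_forall fun τ => ?_, ?_⟩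
  · rw [hslice, integrable_indicator_iff measurableSet_Iic, IntegrableOn,
      Measure.restrict_restrict measurableSet_Iic]
    exact (intervalIntegrable_sub_rpow hα a τ).1.mono_set fun s hs => ⟨hs.2.1, hs.1⟩
  · refine Integrable.mono' (integrable_const ((b - a) ^ α / α))
      (hmeas.norm.stronglyMeasurable.integral_prod_right').aestronglyMeasurable ?_
    refine (ae_restrict_iff' measurableSet_Ioc).2 (.of_forall fun τ hτ => ?_)
    have hnonneg : ∀ s, 0 ≤ (Iic τ).indicator (fun s => (τ - s) ^ (α - 1)) s :=
      fun s => indicator_nonneg (fun s hs => rpow_nonneg (sub_nonneg.2 hs) _) s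
    change ‖∫ s, ‖(Iic τ).indicator (fun s => (τ - s) ^ (α - 1)) s‖ ∂_‖ ≤ _
    simp only [norm_of_nonneg (hnonneg _)]
    rw [norm_of_nonneg (integral_nonneg hnonneg), integral_indicator measurableSet_Iic,
      Measure.restrict_restrict measurableSet_Iic, inter_comm, Ioc_inter_Iic,
      min_eq_right hτ.2, ← intervalIntegral.integral_of_le hτ.1.le, integral_sub_rpow hα]
    gcongr
    · linarith [hτ.1]
    · exact hτ.2

theorem integral_smul_integral_sub_rpow_smul_swap {E : Type*} [NormedAddCommGroup E]
    [NormedSpace ℝ E] [CompleteSpace E] {α a b : ℝ} (hα : 0 < α) (hab : a ≤ b) {g : ℝ → ℝ}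
    {φ : ℝ → E} (hg : MemLp g ⊤ (volume.restrict (Ioc a b)))
    (hφ : MemLp φ ⊤ (volume.restrict (Ioc a b))) :
    ∫ τ in a..b, g τ • ∫ s in a..τ, (τ - s) ^ (α - 1) • φ s
      = ∫ s in a..b, (∫ τ in s..b, (τ - s) ^ (α - 1) * g τ) • φ s := by
  set k := {p : ℝ × ℝ | p.2 ≤ p.1}.indicator fun p => (p.1 - p.2) ^ (α - 1)
  have hF : Integrable (fun p : ℝ × ℝ => (g p.1 * k p) • φ p.2)
      ((volume.restrict (Ioc a b)).prod (volume.restrict (Ioc a b))) :=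
    ((integrable_indicator_sub_rpow_prod hα a b).smul_of_top_right
      hg.comp_fst_top).smul_of_top_left hφ.comp_snd_top
  have hinner_left : ∀ τ ∈ Ioc a b, ∫ s in Ioc a b, (g τ * k (τ, s)) • φ s
      = g τ • ∫ s in a..τ, (τ - s) ^ (α - 1) • φ s := by
    intro τ hτ
    have hslice : ∀ s, (g τ * k (τ, s)) • φ s
        = g τ • (Iic τ).indicator (fun s => (τ - s) ^ (α - 1) • φ s) s := by
      intro s
      by_cases hs : s ≤ τ <;> simp [k, hs, mul_smul]
    simp only [hslice]
    rw [integral_smul, integral_indicator measurableSet_Iic,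
      Measure.restrict_restrict measurableSet_Iic, inter_comm, Ioc_inter_Iic,
      min_eq_right hτ.2, intervalIntegral.integral_of_le hτ.1.le]
  have hinner_right : ∀ s ∈ Ioc a b, ∫ τ in Ioc a b, (g τ * k (τ, s)) • φ s
      = (∫ τ in s..b, (τ - s) ^ (α - 1) * g τ) • φ s := by
    intro s hs
    have hslice : ∀ τ, g τ * k (τ, s) = (Ici s).indicator (fun τ => (τ - s) ^ (α - 1) * g τ) τ := by
      intro τ
      by_cases hsτ : s ≤ τ <;> simp [k, hsτ, mul_comm]
    have hset : Ioc a b ∩ Ici s = Icc s b := by ext; simp; grind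
    simp only [hslice]
    rw [integral_smul_const, integral_indicator measurableSet_Ici,
      Measure.restrict_restrict measurableSet_Ici, inter_comm, hset, integral_Icc_eq_integral_Ioc,
      intervalIntegral.integral_of_le hs.2]
  rw [intervalIntegral.integral_of_le hab, intervalIntegral.integral_of_le hab,
    ← setIntegral_congr_fun measurableSet_Ioc hinner_left,
    ← setIntegral_congr_fun measurableSet_Ioc hinner_right]
  exact integral_integral_swap hF

-- The antiderivative is `((τ - s) / (t - τ))^α / (α (t - s))`.
lemma hasDerivAt_rpow_sub_mul_rpow_sub {α s t τ : ℝ} (hα : α ≠ 0) (hsτ : s < τ) (hτt : τ < t) :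
    HasDerivAt (fun τ => (τ - s) ^ α * (t - τ) ^ (-α) / (α * (t - s)))
      ((τ - s) ^ (α - 1) * (t - τ) ^ (-(1 + α))) τ := by
  have hτs : 0 < τ - s := sub_pos.2 hsτ
  have htτ : 0 < t - τ := sub_pos.2 hτt
  have d1 : HasDerivAt (fun τ => (τ - s) ^ α) (α * (τ - s) ^ (α - 1)) τ := by
    simpa using ((hasDerivAt_id τ).sub_const s).rpow_const (p := α) (Or.inl hτs.ne')
  have d2 : HasDerivAt (fun τ => (t - τ) ^ (-α)) (α * (t - τ) ^ (-α - 1)) τ := by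
    simpa using ((hasDerivAt_id τ).const_sub t).rpow_const (p := -α) (Or.inl htτ.ne')
  refine ((d1.mul d2).div_const (α * (t - s))).congr_deriv ?_
  rw [rpow_sub_one hτs.ne', rpow_sub_one htτ.ne', show -(1 + α) = -α - 1 by ring,
    rpow_sub_one htτ.ne', rpow_neg htτ.le]
  have hts : t - s ≠ 0 := by linarith
  field_simp
  ring

theorem integral_sub_rpow_mul_rpow_sub {α s b t : ℝ} (hα : 0 < α) (hsb : s ≤ b) (hbt : b < t) :
    ∫ τ in s..b, (τ - s) ^ (α - 1) * (t - τ) ^ (-(1 + α))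
      = (b - s) ^ α * (t - b) ^ (-α) / (α * (t - s)) := by
  rcases hsb.eq_or_lt with rfl | hsb
  · simp [zero_rpow hα.ne']
  have htτ : ∀ τ ∈ Icc s b, t - τ ≠ 0 := fun τ hτ => (sub_pos.2 (hτ.2.trans_lt hbt)).ne'
  have hcont : ∀ p : ℝ, ContinuousOn (fun τ => (t - τ) ^ p) (Icc s b) := fun p =>
    (continuousOn_const.sub continuousOn_id).rpow_const (p := p) fun τ hτ => Or.inl (htτ τ hτ)
  rw [intervalIntegral.integral_eq_sub_of_hasDerivAt_of_le hsb.le ?_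
    (fun τ hτ => hasDerivAt_rpow_sub_mul_rpow_sub hα.ne' hτ.1 (hτ.2.trans hbt))]
  · simp [zero_rpow hα.ne']
  · exact (intervalIntegrable_iff_integrableOn_Ioc_of_le hsb.le).2 <|
      (intervalIntegrable_rpow_sub hα s b).1.mul_continuousOn_of_subset (hcont _)
        measurableSet_Ioc isCompact_Icc Ioc_subset_Icc_self
  · exact (((continuousOn_id.sub continuousOn_const).rpow_const fun τ _ => Or.inr hα.le).mul
      (hcont _)).div_const _

lemma memLp_top_sub_rpow {p a b t : ℝ} (hp : p ≤ 0) (hbt : b < t) :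
    MemLp (fun τ => (t - τ) ^ p) ⊤ (volume.restrict (Ioc a b)) := by
  refine memLp_top_of_bound
    (by fun_prop : Measurable fun τ : ℝ => (t - τ) ^ p).aestronglyMeasurable ((t - b) ^ p)
    ((ae_restrict_iff' measurableSet_Ioc).2 (.of_forall fun τ hτ => ?_))
  rw [norm_of_nonneg (rpow_nonneg (by linarith [hτ.2]) _)]
  exact rpow_le_rpow_of_nonpos (by linarith) (by linarith [hτ.2]) hp

lemma inv_Gamma_mul_Gamma_one_sub (α : ℝ) :
    (Gamma α * Gamma (1 - α))⁻¹ = sin (α * π) / π := by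
  rw [Gamma_mul_Gamma_one_sub, inv_div, mul_comm π]

theorem continuation_lemma_second_identity_general
    (n : ℕ) (α t₀ tst θ : ℝ) (hα : α ∈ Set.Ioo (0 : ℝ) 1)
    (h₁ : t₀ < tst)
    (φ : ℝ → EuclideanSpace ℝ (Fin n)) (hφm : Measurable φ)
    (hφb : eLpNorm φ ⊤ (volume.restrict (Set.Icc t₀ tst)) < ⊤)
    (x : ℝ → EuclideanSpace ℝ (Fin n))
    (hx : ∀ t ∈ Set.Icc t₀ tst,
      x t = (Real.Gamma α)⁻¹ • ∫ τ in t₀..t, ((t - τ) ^ (α - 1)) • φ τ) :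
    ∀ t ∈ Set.Ioc tst θ,
      (Real.sin (α * π) / π) • (∫ τ in t₀..tst, ((tst - τ) ^ α / (t - τ)) • φ τ)
        = ((t - tst) ^ α * α / Real.Gamma (1 - α)) •
            ∫ τ in t₀..tst, ((t - τ) ^ (-(1 + α))) • x τ := by
  obtain ⟨hα0, hα1⟩ := hα
  rintro t ⟨htst, -⟩
  have hφ : MemLp φ ⊤ (volume.restrict (Ioc t₀ tst)) :=
    ⟨hφm.aestronglyMeasurable, (eLpNorm_mono_measure _
      (Measure.restrict_mono Ioc_subset_Icc_self le_rfl)).trans_lt hφb⟩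
  have hx_int : ∫ τ in t₀..tst, (t - τ) ^ (-(1 + α)) • x τ = (Gamma α)⁻¹ •
      ∫ τ in t₀..tst, (t - τ) ^ (-(1 + α)) • ∫ s in t₀..τ, (τ - s) ^ (α - 1) • φ s := by
    rw [← intervalIntegral.integral_smul]
    refine intervalIntegral.integral_congr fun τ hτ => ?_
    rw [uIcc_of_le h₁.le] at hτ
    simp only [hx τ hτ, smul_comm (Gamma α)⁻¹]
  have hkernel : ∫ s in t₀..tst, (∫ τ in s..tst, (τ - s) ^ (α - 1) * (t - τ) ^ (-(1 + α))) • φ s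
      = ((t - tst) ^ (-α) / α) • ∫ s in t₀..tst, ((tst - s) ^ α / (t - s)) • φ s := by
    rw [← intervalIntegral.integral_smul]
    refine intervalIntegral.integral_congr fun s hs => ?_
    rw [uIcc_of_le h₁.le] at hs
    rw [integral_sub_rpow_mul_rpow_sub hα0 hs.2 htst, smul_smul]
    congr 1
    field_simp
  have hΓ : (t - tst) ^ α * α / Gamma (1 - α) * (Gamma α)⁻¹ * ((t - tst) ^ (-α) / α)
      = sin (α * π) / π := by
    have hpow : (t - tst) ^ α ≠ 0 := (rpow_pos_of_pos (sub_pos.2 htst) α).ne'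
    have hΓα := (Gamma_pos_of_pos hα0).ne'
    have hΓ1α := (Gamma_pos_of_pos (sub_pos.2 hα1)).ne'
    rw [← inv_Gamma_mul_Gamma_one_sub, rpow_neg (sub_pos.2 htst).le]
    field_simp
  rw [hx_int, integral_smul_integral_sub_rpow_smul_swap hα0 h₁.le
    (memLp_top_sub_rpow (by linarith) htst) hφ, hkernel, smul_smul,
    smul_smul, hΓ]

/-- For `φ ∈ L^∞([t₀,t*],ℝⁿ)`, `x = I^α_{t₀+}φ`, and
`ψ(t) = (sin(απ)/π) ∫_{t₀}^{t*} (t*-τ)^α (t-τ)⁻¹ φ(τ) dτ`, one has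
`ψ(t) = ((t-t*)^α α / Γ(1-α)) ∫_{t₀}^{t*} (t-τ)^{-1-α} x(τ) dτ` for `t ∈ (t*,θ]`. -/
theorem continuation_lemma_second_identity
    (n : ℕ) (α t₀ tst θ : ℝ) (hα : α ∈ Set.Ioo (0 : ℝ) 1)
    (h₁ : t₀ < tst) (h₂ : tst < θ)
    (φ : ℝ → EuclideanSpace ℝ (Fin n)) (hφm : Measurable φ)
    (hφb : eLpNorm φ ⊤ (volume.restrict (Set.Icc t₀ tst)) < ⊤)
    (x : ℝ → EuclideanSpace ℝ (Fin n))
    (hx : ∀ t ∈ Set.Icc t₀ tst,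
      x t = (Real.Gamma α)⁻¹ • ∫ τ in t₀..t, ((t - τ) ^ (α - 1)) • φ τ) :
    ∀ t ∈ Set.Ioc tst θ,
      (Real.sin (α * π) / π) • (∫ τ in t₀..tst, ((tst - τ) ^ α / (t - τ)) • φ τ)
        = ((t - tst) ^ α * α / Real.Gamma (1 - α)) •
            ∫ τ in t₀..tst, ((t - τ) ^ (-(1 + α))) • x τ :=
  continuation_lemma_second_identity_general n α t₀ tst θ hα h₁ φ hφm hφb x hx
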